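/- Let (H, R±) be a coquasitriangular 𝒱-face algebra, Γ a semigroup, and H = ⊕_{γ∈Γ} H_γ a decomposition with H_γ H_δ ⊂ H_{γδ} and Δ(H_γ) ⊂ H_γ ⊗ H_γ. Let χ: Γ × Γ → K^× satisfy χ(γ₁γ₂, δ) = χ(γ₁, δ)χ(γ₂, δ) and χ(γ, δ₁δ₂) = χ(γ, δ₁)χ(γ, δ₂). Then R⁺_χ defined by R±_χ(a, b) = χ(γ, δ)^{±1} R±(a, b) for a ∈ H_γ, b ∈ H_δ is a new braiding of H; moreover, if (H, R±) is closable then so is (H, R±_χ). -/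

import Mathlib

open TensorProduct

noncomputable section

namespace FaceAlg

variable (K : Type*) [Field K]

/-- Multiplication of an algebra as a linear map on the tensor square. -/
def mulH (H : Type*) [Ring H] [Algebra K H] : H ⊗[K] H →ₗ[K] H := LinearMap.mul' K H

/-- The flip on the tensor square. -/
def flipT (H : Type*) [Ring H] [Algebra K H] : H ⊗[K] H →ₗ[K] H ⊗[K] H :=
  (TensorProduct.comm K H H).toLinearMap

/-- Opposite multiplication as a linear map. -/
def mulOp (H : Type*) [Ring H] [Algebra K H] : H ⊗[K] H →ₗ[K] H := mulH K H ∘ₗ flipT K H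

/-- The permutation (a⊗b)⊗c ↦ (a⊗c)⊗b. -/
def swap23 (H : Type*) [Ring H] [Algebra K H] :
    (H ⊗[K] H) ⊗[K] H →ₗ[K] (H ⊗[K] H) ⊗[K] H :=
  (TensorProduct.assoc K H H H).symm.toLinearMap ∘ₗ
    TensorProduct.map LinearMap.id (TensorProduct.comm K H H).toLinearMap ∘ₗ
    (TensorProduct.assoc K H H H).toLinearMap

variable (V : Type*) [Fintype V] [DecidableEq V] (H : Type*) [Ring H] [Algebra K H]

/-- A `𝒱`-face algebra: an algebra with a coalgebra structure and two families of
face idempotents `e i`, `eb i` (the latter is `ê i`), subject to the axioms of Hayashi. -/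
structure Str where
  comul : H →ₗ[K] H ⊗[K] H
  counit : H →ₗ[K] K
  e : V → H
  eb : V → H
  coassoc : (TensorProduct.assoc K H H H).toLinearMap ∘ₗ
      (TensorProduct.map comul LinearMap.id) ∘ₗ comul =
      (TensorProduct.map LinearMap.id comul) ∘ₗ comul
  counit_comul : (TensorProduct.lid K H).toLinearMap ∘ₗ
      (TensorProduct.map counit LinearMap.id) ∘ₗ comul = LinearMap.id
  comul_counit : (TensorProduct.rid K H).toLinearMap ∘ₗ
      (TensorProduct.map LinearMap.id counit) ∘ₗ comul = LinearMap.id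
  comul_mul : ∀ a b : H, comul (a * b) = comul a * comul b
  e_mul : ∀ i j : V, e i * e j = if i = j then e i else 0
  eb_mul : ∀ i j : V, eb i * eb j = if i = j then eb i else 0
  e_eb_comm : ∀ i j : V, e i * eb j = eb j * e i
  sum_e : ∑ k : V, e k = 1
  sum_eb : ∑ k : V, eb k = 1
  comul_ebe : ∀ i j : V, comul (eb i * e j) = ∑ k : V, (eb i * e k) ⊗ₜ[K] (eb k * e j)
  counit_ebe : ∀ i j : V, counit (eb i * e j) = if i = j then (1 : K) else 0
  counit_mul : ∀ a b : H, counit (a * b) = ∑ k : V, counit (a * e k) * counit (eb k * b)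

variable {K V H}

namespace Str

variable (F : Str K V H)

/-- Convolution product on the dual of a face algebra. -/
def conv (X Y : H →ₗ[K] K) : H →ₗ[K] K :=
  (TensorProduct.lid K K).toLinearMap ∘ₗ TensorProduct.map X Y ∘ₗ F.comul

/-- The comultiplication of the tensor-square coalgebra `H ⊗ H`. -/
def comul2 : (H ⊗[K] H) →ₗ[K] (H ⊗[K] H) ⊗[K] (H ⊗[K] H) :=
  (TensorProduct.tensorTensorTensorComm K H H H H).toLinearMap ∘ₗ
    TensorProduct.map F.comul F.comul

/-- Convolution product on the dual of `H ⊗ H`. -/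
def conv2 (Z W : H ⊗[K] H →ₗ[K] K) : H ⊗[K] H →ₗ[K] K :=
  (TensorProduct.lid K K).toLinearMap ∘ₗ TensorProduct.map Z W ∘ₗ F.comul2

/-- The comultiplication of the coalgebra `H ⊗ H^cop`. -/
def comul2cop : (H ⊗[K] H) →ₗ[K] (H ⊗[K] H) ⊗[K] (H ⊗[K] H) :=
  (TensorProduct.tensorTensorTensorComm K H H H H).toLinearMap ∘ₗ
    TensorProduct.map F.comul ((TensorProduct.comm K H H).toLinearMap ∘ₗ F.comul)

/-- Convolution product on the dual of `H ⊗ H^cop`. -/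
def conv2cop (Z W : H ⊗[K] H →ₗ[K] K) : H ⊗[K] H →ₗ[K] K :=
  (TensorProduct.lid K K).toLinearMap ∘ₗ TensorProduct.map Z W ∘ₗ F.comul2cop

/-- The comultiplication of the tensor-cube coalgebra `(H ⊗ H) ⊗ H`. -/
def comul3 : ((H ⊗[K] H) ⊗[K] H) →ₗ[K] ((H ⊗[K] H) ⊗[K] H) ⊗[K] ((H ⊗[K] H) ⊗[K] H) :=
  (TensorProduct.tensorTensorTensorComm K (H ⊗[K] H) (H ⊗[K] H) H H).toLinearMap ∘ₗ
    TensorProduct.map F.comul2 F.comul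

/-- Convolution product on the dual of `(H ⊗ H) ⊗ H`. -/
def conv3 (Z W : (H ⊗[K] H) ⊗[K] H →ₗ[K] K) : (H ⊗[K] H) ⊗[K] H →ₗ[K] K :=
  (TensorProduct.lid K K).toLinearMap ∘ₗ TensorProduct.map Z W ∘ₗ F.comul3

/-- `Z₁₂` for a functional on `H ⊗ H`. -/
def ins12 (Z : H ⊗[K] H →ₗ[K] K) : (H ⊗[K] H) ⊗[K] H →ₗ[K] K :=
  (TensorProduct.lid K K).toLinearMap ∘ₗ TensorProduct.map Z F.counit

/-- `Z₂₃` for a functional on `H ⊗ H`. -/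
def ins23 (Z : H ⊗[K] H →ₗ[K] K) : (H ⊗[K] H) ⊗[K] H →ₗ[K] K :=
  (TensorProduct.lid K K).toLinearMap ∘ₗ TensorProduct.map F.counit Z ∘ₗ
    (TensorProduct.assoc K H H H).toLinearMap

/-- `Z₁₃` for a functional on `H ⊗ H`. -/
def ins13 (Z : H ⊗[K] H →ₗ[K] K) : (H ⊗[K] H) ⊗[K] H →ₗ[K] K :=
  F.ins12 Z ∘ₗ swap23 K H

/-- `m*(1)`, the image of the unit of `H*` in `(H ⊗ H)*`. -/
def cunit2 : H ⊗[K] H →ₗ[K] K := F.counit ∘ₗ mulH K H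

/-- `(m^op)*(1)`. -/
def cunit2op : H ⊗[K] H →ₗ[K] K := F.counit ∘ₗ mulOp K H

end Str

/-- `xm` is the `(ep, em)`-generalized inverse of `xp` with respect to `mul`. -/
def GenInv {α : Type*} (mul : α → α → α) (ep em xp xm : α) : Prop :=
  mul xm xp = ep ∧ mul xp xm = em ∧ mul xp (mul xm xp) = xp ∧ mul xm (mul xp xm) = xm

/-- The functional `X ⊗ Y` on `H ⊗ H`. -/
def dtens (X Y : H →ₗ[K] K) : H ⊗[K] H →ₗ[K] K :=
  (TensorProduct.lid K K).toLinearMap ∘ₗ TensorProduct.map X Y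

/-- `(Rp, Rm)` is a braiding of the face algebra `F`:  `Rm` is the
`(m*(1), (m^op)*(1))`-generalized inverse of `Rp`, `Rp m*(X) Rm = (m^op)*(X)` and
the two hexagon conditions hold. -/
structure IsBraiding (F : Str K V H) (Rp Rm : H ⊗[K] H →ₗ[K] K) : Prop where
  geninv : GenInv F.conv2 F.cunit2 F.cunit2op Rp Rm
  inter : ∀ X : H →ₗ[K] K, F.conv2 (F.conv2 Rp (X ∘ₗ mulH K H)) Rm = X ∘ₗ mulOp K H
  hex1 : Rp ∘ₗ TensorProduct.map (mulH K H) LinearMap.id =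
    F.conv3 (F.ins13 Rp) (F.ins23 Rp)
  hex2 : Rp ∘ₗ TensorProduct.map LinearMap.id (mulH K H) ∘ₗ
      (TensorProduct.assoc K H H H).toLinearMap =
    F.conv3 (F.ins13 Rp) (F.ins12 Rp)


namespace Str

variable (F : Str K V H)

/-- Convolution product on `End(H)`. -/
def convEnd (f g : H →ₗ[K] H) : H →ₗ[K] H :=
  mulH K H ∘ₗ TensorProduct.map f g ∘ₗ F.comul

/-- `E⁺(a) = Σ_k ε(a e_k) e_k`. -/
def Ep : H →ₗ[K] H :=
  ∑ k : V, LinearMap.toSpanSingleton K H (F.e k) ∘ₗ F.counit ∘ₗ LinearMap.mulRight K (F.e k)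

/-- `E⁻(a) = Σ_k ε(e_k a) ê_k`. -/
def Em : H →ₗ[K] H :=
  ∑ k : V, LinearMap.toSpanSingleton K H (F.eb k) ∘ₗ F.counit ∘ₗ LinearMap.mulLeft K (F.e k)

/-- `F⁺(a,b) = Σ_k ε(e_k a) ε(e_k b)`. -/
def Fp : H ⊗[K] H →ₗ[K] K :=
  ∑ k : V, (TensorProduct.lid K K).toLinearMap ∘ₗ
    TensorProduct.map (F.counit ∘ₗ LinearMap.mulLeft K (F.e k))
      (F.counit ∘ₗ LinearMap.mulLeft K (F.e k))

/-- `F⁻(a,b) = Σ_k ε(a e_k) ε(b e_k)`. -/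
def Fm : H ⊗[K] H →ₗ[K] K :=
  ∑ k : V, (TensorProduct.lid K K).toLinearMap ∘ₗ
    TensorProduct.map (F.counit ∘ₗ LinearMap.mulRight K (F.e k))
      (F.counit ∘ₗ LinearMap.mulRight K (F.e k))

end Str

/-- `S` is an antipode for `F`: the `(E⁺, E⁻)`-generalized inverse of the identity in
the convolution algebra `End(H)`. -/
def IsAntipode (F : Str K V H) (S : H →ₗ[K] H) : Prop :=
  GenInv F.convEnd F.Ep F.Em LinearMap.id S

/-- `(Qp, Qm)` are Lyubashenko forms for the braiding `(Rp, Rm)`:  `Qm` is the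
`(F⁺, F⁻)`-generalized inverse of `Rp` and `Qp` is the `(F⁻, F⁺)`-generalized inverse
of `Rm` in the algebra `(H ⊗ H^cop)*`. -/
def AreLyu (F : Str K V H) (Rp Rm Qp Qm : H ⊗[K] H →ₗ[K] K) : Prop :=
  GenInv F.conv2cop F.Fp F.Fm Rp Qm ∧ GenInv F.conv2cop F.Fm F.Fp Rm Qp

/-- In the Hopf case, `Q⁺(a,b) = R⁻(S(a), b)`. -/
def QpH (S : H →ₗ[K] H) (Rm : H ⊗[K] H →ₗ[K] K) : H ⊗[K] H →ₗ[K] K :=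
  Rm ∘ₗ TensorProduct.map S LinearMap.id

/-- In the Hopf case, `Q⁻(a,b) = R⁺(a, S(b))`. -/
def QmH (S : H →ₗ[K] H) (Rp : H ⊗[K] H →ₗ[K] K) : H ⊗[K] H →ₗ[K] K :=
  Rp ∘ₗ TensorProduct.map LinearMap.id S

/-- A CQT face algebra is closable if Lyubashenko forms exist. -/
def IsClosable (F : Str K V H) (Rp Rm : H ⊗[K] H →ₗ[K] K) : Prop :=
  ∃ Qp Qm, AreLyu F Rp Rm Qp Qm

namespace Str

variable (F : Str K V H)

/-- Drinfeld functional `U₁(a) = Σ Q⁻(a₍₂₎, a₍₁₎)` built from `Q⁻`. -/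
def U1of (Qm : H ⊗[K] H →ₗ[K] K) : H →ₗ[K] K :=
  Qm ∘ₗ (TensorProduct.comm K H H).toLinearMap ∘ₗ F.comul

/-- Drinfeld functional `U₂(a) = Σ Q⁺(a₍₁₎, a₍₂₎)` built from `Q⁺`. -/
def U2of (Qp : H ⊗[K] H →ₗ[K] K) : H →ₗ[K] K := Qp ∘ₗ F.comul

/-- `U₁⁻¹(a) = Σ Q⁺(a₍₂₎, a₍₁₎)`. -/
def U1invOf (Qp : H ⊗[K] H →ₗ[K] K) : H →ₗ[K] K :=
  Qp ∘ₗ (TensorProduct.comm K H H).toLinearMap ∘ₗ F.comul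

/-- `U₂⁻¹(a) = Σ Q⁻(a₍₁₎, a₍₂₎)`. -/
def U2invOf (Qm : H ⊗[K] H →ₗ[K] K) : H →ₗ[K] K := Qm ∘ₗ F.comul

/-- The Drinfeld functional `U₁` of a CQT Hopf face algebra. -/
def U1H (S : H →ₗ[K] H) (Rp : H ⊗[K] H →ₗ[K] K) : H →ₗ[K] K := F.U1of (QmH S Rp)

/-- The Drinfeld functional `U₂` of a CQT Hopf face algebra. -/
def U2H (S : H →ₗ[K] H) (Rm : H ⊗[K] H →ₗ[K] K) : H →ₗ[K] K := F.U2of (QpH S Rm)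

/-- The inverse `U₁⁻¹` of the Drinfeld functional `U₁` of a CQT Hopf face algebra. -/
def U1invH (S : H →ₗ[K] H) (Rm : H ⊗[K] H →ₗ[K] K) : H →ₗ[K] K := F.U1invOf (QpH S Rm)

/-- The inverse `U₂⁻¹` of the Drinfeld functional `U₂` of a CQT Hopf face algebra. -/
def U2invH (S : H →ₗ[K] H) (Rp : H ⊗[K] H →ₗ[K] K) : H →ₗ[K] K := F.U2invOf (QmH S Rp)

end Str

/-- A group-like functional on a face algebra. -/
structure IsGLF (F : Str K V H) (G : H →ₗ[K] K) : Prop where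
  gmul : ∀ a b : H, G (a * b) = ∑ k : V, G (a * F.e k) * G (F.eb k * b)
  geae : ∀ (i j : V) (a : H), G (F.eb i * a * F.eb j) = G (F.e i * a * F.e j)
  gee : ∀ i j : V, G (F.eb i * F.e j) = if i = j then 1 else 0

/-- `Vf` (with inverse `Vfi`) is a ribbon functional on the CQT Hopf face algebra
`(F, S, Rp, Rm)`: an invertible central element of `H*` such that
`m*(𝒱) = R⁻ R⁻₂₁ (𝒱 ⊗ 𝒱)` and `S*(𝒱) = 𝒱`. -/
structure IsRibbon (F : Str K V H) (S : H →ₗ[K] H) (Rp Rm : H ⊗[K] H →ₗ[K] K)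
    (Vf Vfi : H →ₗ[K] K) : Prop where
  inv_r : F.conv Vf Vfi = F.counit
  inv_l : F.conv Vfi Vf = F.counit
  central : ∀ X : H →ₗ[K] K, F.conv Vf X = F.conv X Vf
  mstar : Vf ∘ₗ mulH K H = F.conv2 (F.conv2 Rm (Rm ∘ₗ flipT K H)) (dtens Vf Vf)
  sstar : Vf ∘ₗ S = Vf

/-- The set of ribbon functionals of a CQT Hopf face algebra. -/
def RibSet (F : Str K V H) (S : H →ₗ[K] H) (Rp Rm : H ⊗[K] H →ₗ[K] K) :
    Set (H →ₗ[K] K) :=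
  {Vf | ∃ Vfi, IsRibbon F S Rp Rm Vf Vfi}

/-- The set of modified ribbon functionals `M = U₁ 𝒱⁻¹` of a CQT Hopf face algebra. -/
def MRibSet (F : Str K V H) (S : H →ₗ[K] H) (Rp Rm : H ⊗[K] H →ₗ[K] K) :
    Set (H →ₗ[K] K) :=
  {M | ∃ Vf Vfi, IsRibbon F S Rp Rm Vf Vfi ∧ M = F.conv (F.U1H S Rp) Vfi}

variable {H' : Type*} [Ring H'] [Algebra K H']

/-- A map of `𝒱`-face algebras: an algebra map which is a coalgebra map preserving
the face idempotents. -/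
structure IsFaceMap (F : Str K V H) (F' : Str K V H') (f : H →ₐ[K] H') : Prop where
  fcomul : F'.comul ∘ₗ f.toLinearMap =
    TensorProduct.map f.toLinearMap f.toLinearMap ∘ₗ F.comul
  fcounit : F'.counit ∘ₗ f.toLinearMap = F.counit
  fe : ∀ i, f (F.e i) = F'.e i
  feb : ∀ i, f (F.eb i) = F'.eb i


/-- The matrix coefficients `c p q` define a comodule structure (with adapted basis
indexed by `E`, with face data `s, r`) on `E → K`. -/
structure IsCoMatrix {E : Type*} [Fintype E] [DecidableEq E]
    (F : Str K V H) (s r : E → V) (c : E → E → H) : Prop where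
  ccomul : ∀ p q, F.comul (c p q) = ∑ t, c p t ⊗ₜ[K] c t q
  ccounit : ∀ p q, F.counit (c p q) = if p = q then (1 : K) else 0
  cadaptl : ∀ p q, (F.eb (s p) * F.e (s q)) * c p q = c p q
  cadaptr : ∀ p q, c p q * (F.eb (r p) * F.e (r q)) = c p q

/-- The matrix `π_U(X)` of a functional `X` acting on the comodule with coefficient
matrix `c`. -/
def coefMat {E : Type*} [Fintype E] (c : E → E → H) (X : H →ₗ[K] K) :
    Matrix E E K := fun p q => X (c p q)

/-- `T` is (the matrix of) a map of comodules from the comodule with coefficients `c`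
to the comodule with coefficients `c'`. -/
def IsComMat {E E' : Type*} [Fintype E] [Fintype E']
    (c : E → E → H) (c' : E' → E' → H) (T : Matrix E' E K) : Prop :=
  ∀ a q, ∑ p, T a p • c p q = ∑ p, T p q • c' a p

variable (K)

/-- `Wsub` is a subcomodule of the comodule with coefficient matrix `c`. -/
def StableSub {E : Type*} [Fintype E] (c : E → E → H) (Wsub : Submodule K (E → K)) : Prop :=
  ∀ X : H →ₗ[K] K, ∀ u ∈ Wsub, (coefMat c X).mulVec u ∈ Wsub

/-- Irreducibility of the comodule with coefficient matrix `c`. -/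
def IsIrredCo {E : Type*} [Fintype E] (c : E → E → H) : Prop :=
  (⊥ : Submodule K (E → K)) ≠ ⊤ ∧
    ∀ Wsub : Submodule K (E → K), StableSub K c Wsub → Wsub = ⊥ ∨ Wsub = ⊤

/-- Absolute irreducibility of the comodule with coefficient matrix `c`
(irreducible with only scalar comodule endomorphisms). -/
def IsAbsIrredCo {E : Type*} [Fintype E] [DecidableEq E] (c : E → E → H) : Prop :=
  IsIrredCo K c ∧ ∀ T : Matrix E E K, IsComMat c c T → ∃ α : K, T = α • (1 : Matrix E E K)

variable {K}

/-- The set of composable pairs of edges (paths of length two) of the graph with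
source and range maps `s, r`. -/
abbrev Comp2 {E : Type*} {V : Type*} (s r : E → V) : Type _ :=
  {pq : E × E // r pq.1 = s pq.2}

/-- The Boltzmann weight `w[c (a/d) b]` (input path `(a,b)`, output path `(c,d)`) of the
face model given by the operator `W` on `K𝒢²`, extended by zero to non-faces. -/
def went {E : Type*} [Fintype E] {V : Type*} [DecidableEq V] (s r : E → V)
    (W : Matrix (Comp2 s r) (Comp2 s r) K) (a b c d : E) : K :=
  if h1 : r a = s b then
    (if h2 : r c = s d then W ⟨(c, d), h2⟩ ⟨(a, b), h1⟩ else 0)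
  else 0

/-- The operator `G ⊗̄ G` on `K𝒢²` induced by a face-space preserving operator `G`
on `K𝒢¹`. -/
def tmat2 {E : Type*} {V : Type*} (s r : E → V) (Gm : Matrix E E K) :
    Matrix (Comp2 s r) (Comp2 s r) K :=
  fun x y => Gm x.1.1 y.1.1 * Gm x.1.2 y.1.2

/-- `A` (with CQT structure `F, Rp, Rm` and coaction matrix `c` on `K𝒢¹`) is the FRT
face algebra `𝔄(w)` of the face model `(𝒢, w)` where `𝒢` is the graph described by
`(V, E, s, r)` and `w` is given by the operator `W` on `K𝒢²`:  the braiding takes the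
prescribed values `R⁺(e(p,q), e(u,v)) = w[u (q/p) v]` on the matrix coefficients,
these coefficients (together with the face idempotents) generate `A`, and `A` is
universal with these properties. -/
structure IsFRT {A : Type*} [Ring A] [Algebra K A] (F : Str K V A)
    (Rp Rm : A ⊗[K] A →ₗ[K] K)
    {E : Type*} [Fintype E] [DecidableEq E] (s r : E → V)
    (W : Matrix (Comp2 s r) (Comp2 s r) K) (c : E → E → A) : Prop where
  braid : IsBraiding F Rp Rm
  com : IsCoMatrix F s r c
  rval : ∀ p q u v, Rp (c p q ⊗ₜ[K] c u v) = went s r W q v u p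
  gen : Algebra.adjoin K
      ((Set.range fun ij : V × V => F.eb ij.1 * F.e ij.2) ∪
        Set.range fun pq : E × E => c pq.1 pq.2) = ⊤
  univ : ∀ (A' : Type*) [Ring A'] [Algebra K A'] (F' : Str K V A')
      (Rp' Rm' : A' ⊗[K] A' →ₗ[K] K) (c' : E → E → A'),
      IsBraiding F' Rp' Rm' → IsCoMatrix F' s r c' →
      (∀ p q u v, Rp' (c' p q ⊗ₜ[K] c' u v) = went s r W q v u p) →
      ∃! f : A →ₐ[K] A', IsFaceMap F F' f ∧
        (∀ x, Rp' (TensorProduct.map f.toLinearMap f.toLinearMap x) = Rp x) ∧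
        ∀ p q, f (c p q) = c' p q

/-- `A` (with face structure `F` and coaction matrix `c` on `K𝒢¹`) is the free face
algebra `ℌ(𝒢)` on the graph `𝒢` described by `(V, E, s, r)`: it is generated by the
matrix coefficients and the face idempotents and universal among face algebras
coacting on `K𝒢¹`. -/
structure IsPathAlg {A : Type*} [Ring A] [Algebra K A] (F : Str K V A)
    {E : Type*} [Fintype E] [DecidableEq E] (s r : E → V) (c : E → E → A) : Prop where
  com : IsCoMatrix F s r c
  gen : Algebra.adjoin K
      ((Set.range fun ij : V × V => F.eb ij.1 * F.e ij.2) ∪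
        Set.range fun pq : E × E => c pq.1 pq.2) = ⊤
  univ : ∀ (A' : Type*) [Ring A'] [Algebra K A'] (F' : Str K V A') (c' : E → E → A'),
      IsCoMatrix F' s r c' →
      ∃! f : A →ₐ[K] A', IsFaceMap F F' f ∧ ∀ p q, f (c p q) = c' p q


/-- Rearrangement `(a⊗b)⊗(c⊗d) ↦ (a⊗(b⊗c))⊗d`. -/
def rearr1 : (H ⊗[K] H) ⊗[K] (H ⊗[K] H) →ₗ[K] (H ⊗[K] (H ⊗[K] H)) ⊗[K] H :=
  TensorProduct.map (TensorProduct.assoc K H H H).toLinearMap LinearMap.id ∘ₗ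
    (TensorProduct.assoc K (H ⊗[K] H) H H).symm.toLinearMap

/-- Rearrangement `(a⊗(x⊗y))⊗d ↦ (a⊗x)⊗(d⊗y)`. -/
def rearr2 : (H ⊗[K] (H ⊗[K] H)) ⊗[K] H →ₗ[K] (H ⊗[K] H) ⊗[K] (H ⊗[K] H) :=
  TensorProduct.map LinearMap.id (TensorProduct.comm K H H).toLinearMap ∘ₗ
    (TensorProduct.assoc K (H ⊗[K] H) H H).toLinearMap ∘ₗ
    TensorProduct.map (TensorProduct.assoc K H H H).symm.toLinearMap LinearMap.id

namespace Str

variable (F : Str K V H)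

/-- `Θ(b ⊗ c) = Σ R⁻(b₍₁₎, c₍₃₎) Q⁺(b₍₃₎, c₍₁₎) (c₍₂₎ ⊗ b₍₂₎)`, the scalar part of
the multiplication rule of `Ĥ = H ⊗_𝔈 H^bop`. -/
def theta (Rm Qp : H ⊗[K] H →ₗ[K] K) : H ⊗[K] H →ₗ[K] H ⊗[K] H :=
  (TensorProduct.comm K H H).toLinearMap ∘ₗ
    (TensorProduct.rid K (H ⊗[K] H)).toLinearMap ∘ₗ
    (TensorProduct.lid K ((H ⊗[K] H) ⊗[K] K)).toLinearMap ∘ₗ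
    TensorProduct.map Rm (TensorProduct.map LinearMap.id Qp) ∘ₗ
    TensorProduct.map LinearMap.id F.comul2cop ∘ₗ
    F.comul2cop

/-- The multiplication
`(a ⊗ σ(b))(c ⊗ σ(d)) = Σ R⁻(b₍₁₎,c₍₃₎) Q⁺(b₍₃₎,c₍₁₎) a c₍₂₎ ⊗ σ(d b₍₂₎)`
of `Ĥ = H ⊗_𝔈 H^bop`, as a linear map on representatives in `H ⊗ H`. -/
def mu2 (Rm Qp : H ⊗[K] H →ₗ[K] K) :
    (H ⊗[K] H) ⊗[K] (H ⊗[K] H) →ₗ[K] H ⊗[K] H :=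
  TensorProduct.map (mulH K H) (mulH K H) ∘ₗ rearr2 ∘ₗ
    TensorProduct.map (TensorProduct.map LinearMap.id (F.theta Rm Qp)) LinearMap.id ∘ₗ
    rearr1

/-- `Σ (1 ⊗ σ(a₍₁₎))(a₍₂₎ ⊗ σ(1))`, the left side of the first defining relation of
the Hopf closure. -/
def g1 (Rm Qp : H ⊗[K] H →ₗ[K] K) : H →ₗ[K] H ⊗[K] H :=
  F.mu2 Rm Qp ∘ₗ
    TensorProduct.map (TensorProduct.mk K H H 1) ((TensorProduct.mk K H H).flip 1) ∘ₗ
    F.comul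

/-- `Σ_k ε(a e_k) e_k` as an element of `Ĥ`. -/
def r1 : H →ₗ[K] H ⊗[K] H :=
  ∑ k : V, LinearMap.toSpanSingleton K (H ⊗[K] H) (F.e k ⊗ₜ[K] 1) ∘ₗ
    F.counit ∘ₗ LinearMap.mulRight K (F.e k)

/-- `Σ_k ε(e_k a) ê_k` as an element of `Ĥ`. -/
def r2 : H →ₗ[K] H ⊗[K] H :=
  ∑ k : V, LinearMap.toSpanSingleton K (H ⊗[K] H) (F.eb k ⊗ₜ[K] 1) ∘ₗ
    F.counit ∘ₗ LinearMap.mulLeft K (F.e k)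

/-- The set spanning the kernel of the canonical projection `H ⊗ H^bop → Hc(H)`:
the `𝔈`-balancing relations of `H ⊗_𝔈 H^bop` together with the two-sided ideal `𝔍`
generated by the defining relations of the Hopf closure. -/
def hcKerSet (Rm Qp : H ⊗[K] H →ₗ[K] K) : Set (H ⊗[K] H) :=
  {z | ∃ (a b : H) (k l : V),
      z = (a * (F.eb k * F.e l)) ⊗ₜ[K] b - a ⊗ₜ[K] (b * (F.eb l * F.e k))} ∪
  {z | ∃ (x y : H ⊗[K] H) (a : H),
      z = F.mu2 Rm Qp (x ⊗ₜ[K] F.mu2 Rm Qp ((F.g1 Rm Qp a - F.r1 a) ⊗ₜ[K] y)) ∨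
      z = F.mu2 Rm Qp (x ⊗ₜ[K] F.mu2 Rm Qp ((F.comul a - F.r2 a) ⊗ₜ[K] y))}

end Str

/-- The canonical map `ι : H → Hc(H)`, `a ↦ a ⊗_𝔈 σ(1) + 𝔍`. -/
def iotaHc {Hc : Type*} [AddCommGroup Hc] [Module K Hc]
    (π : H ⊗[K] H →ₗ[K] Hc) : H →ₗ[K] Hc :=
  π ∘ₗ (TensorProduct.mk K H H).flip 1

/-- The data `(FB, S, RpB, RmB, π)` realizes the CQT Hopf face algebra `Hc` as the
Hopf closure `Hc(H)` of the closable CQT face algebra `(F, Rp, Rm)` with Lyubashenko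
forms `(Qp, Qm)`.  Here `π : H ⊗ H → Hc` is the canonical projection
`a ⊗ b ↦ a σ(b)`, `ι = π(- ⊗ 1)` is a map of CQT face algebras,
`a σ(b) = ι(a) S(ι(b))`, `π` intertwines the multiplication of `Ĥ = H ⊗_𝔈 H^bop`
with that of `Hc`, and the kernel of `π` is spanned by the balancing relations
together with the ideal `𝔍` generated by the defining relations of the Hopf
closure. -/
structure IsHopfClosure {Hc : Type*} [Ring Hc] [Algebra K Hc]
    (F : Str K V H) (Rp Rm Qp Qm : H ⊗[K] H →ₗ[K] K)
    (FB : Str K V Hc) (S : Hc →ₗ[K] Hc) (RpB RmB : Hc ⊗[K] Hc →ₗ[K] K)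
    (π : H ⊗[K] H →ₗ[K] Hc) : Prop where
  braid : IsBraiding F Rp Rm
  lyu : AreLyu F Rp Rm Qp Qm
  braidB : IsBraiding FB RpB RmB
  antiB : IsAntipode FB S
  surj : Function.Surjective π
  iota_one : iotaHc π (1 : H) = 1
  iota_mul : ∀ a b : H, iotaHc π (a * b) = iotaHc π a * iotaHc π b
  iota_comul : ∀ a : H, FB.comul (iotaHc π a) =
      TensorProduct.map (iotaHc π) (iotaHc π) (F.comul a)
  iota_counit : ∀ a : H, FB.counit (iotaHc π a) = F.counit a
  iota_e : ∀ i, iotaHc π (F.e i) = FB.e i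
  iota_eb : ∀ i, iotaHc π (F.eb i) = FB.eb i
  iota_braid : ∀ x : H ⊗[K] H,
      RpB (TensorProduct.map (iotaHc π) (iotaHc π) x) = Rp x
  pi_sigma : ∀ a b : H, π (a ⊗ₜ[K] b) = iotaHc π a * S (iotaHc π b)
  pi_mul : ∀ x y : H ⊗[K] H, π (F.mu2 Rm Qp (x ⊗ₜ[K] y)) = π x * π y
  ker_eq : LinearMap.ker π = Submodule.span K (F.hcKerSet Rm Qp)

/-- A finite-dimensional comodule given by a coefficient matrix with respect to an
adapted basis indexed by `B`, with face data `s, r : B → V`. -/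
structure BCom (V : Type*) (H : Type*) where
  B : Type
  [fB : Fintype B]
  [dB : DecidableEq B]
  s : B → V
  r : B → V
  c : B → B → H

attribute [instance] BCom.fB BCom.dB

namespace BCom

/-- The comodule axioms for a `BCom`. -/
def IsCo (F : Str K V H) (M : BCom V H) : Prop := IsCoMatrix F M.s M.r M.c

/-- The truncated tensor product `U ⊗̄ V` of two based comodules: its basis consists
of the composable pairs of basis elements. -/
def tt [Mul H] (M N : BCom V H) : BCom V H where
  B := {x : M.B × N.B // M.r x.1 = N.s x.2}
  s := fun x => M.s x.1.1
  r := fun x => N.r x.1.2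
  c := fun x y => M.c x.1.1 y.1.1 * N.c x.1.2 y.1.2

/-- The dual comodule, with coefficients `S(c q p)`. -/
def dual (S : H → H) (M : BCom V H) : BCom V H where
  B := M.B
  s := M.r
  r := M.s
  c := fun p q => S (M.c q p)

end BCom

/-- The matrix of `f ⊗̄ g` on truncated tensor products. -/
def cmatT [Mul H] {M N M' N' : BCom V H}
    (f : Matrix M'.B M.B K) (g : Matrix N'.B N.B K) :
    Matrix (M'.tt N').B (M.tt N).B K :=
  fun x y => f x.1.1 y.1.1 * g x.1.2 y.1.2

/-- The matrix of the associativity identification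
`(M ⊗̄ N) ⊗̄ P ≅ M ⊗̄ (N ⊗̄ P)`. -/
def assocMat [Mul H] (M N P : BCom V H) :
    Matrix (M.tt (N.tt P)).B ((M.tt N).tt P).B K :=
  fun x y =>
    if x.1.1 = y.1.1.1.1 ∧ x.1.2.1.1 = y.1.1.1.2 ∧ x.1.2.1.2 = y.1.2 then 1 else 0

/-- The matrix of the inverse associativity identification
`M ⊗̄ (N ⊗̄ P) ≅ (M ⊗̄ N) ⊗̄ P`. -/
def assocMat' [Mul H] (M N P : BCom V H) :
    Matrix ((M.tt N).tt P).B (M.tt (N.tt P)).B K :=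
  fun y x =>
    if x.1.1 = y.1.1.1.1 ∧ x.1.2.1.1 = y.1.1.1.2 ∧ x.1.2.1.2 = y.1.2 then 1 else 0

/-- A braiding `{c_{UV}}` on the category `Com^f_H` of finite-dimensional comodules
of the face algebra `F`, with the truncated tensor product: a functorial family of
comodule isomorphisms `c_{MN} : M ⊗̄ N ≅ N ⊗̄ M` satisfying the hexagon axioms. -/
structure BraidedCom (F : Str K V H) where
  br : ∀ M N : BCom V H, Matrix (N.tt M).B (M.tt N).B K
  brInv : ∀ M N : BCom V H, Matrix (M.tt N).B (N.tt M).B K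
  br_comod : ∀ M N, M.IsCo F → N.IsCo F →
    IsComMat (M.tt N).c (N.tt M).c (br M N)
  br_inv_l : ∀ M N, M.IsCo F → N.IsCo F → brInv M N * br M N = 1
  br_inv_r : ∀ M N, M.IsCo F → N.IsCo F → br M N * brInv M N = 1
  br_natural : ∀ (M N M' N' : BCom V H)
      (f : Matrix M'.B M.B K) (g : Matrix N'.B N.B K),
      M.IsCo F → N.IsCo F → M'.IsCo F → N'.IsCo F →
      IsComMat M.c M'.c f → IsComMat N.c N'.c g →
      cmatT g f * br M N = br M' N' * cmatT f g
  br_hex1 : ∀ M N P : BCom V H, M.IsCo F → N.IsCo F → P.IsCo F →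
      br (M.tt N) P =
        assocMat (K := K) P M N * cmatT (br M P) (1 : Matrix N.B N.B K) * assocMat' (K := K) M P N *
          cmatT (1 : Matrix M.B M.B K) (br N P) * assocMat (K := K) M N P
  br_hex2 : ∀ M N P : BCom V H, M.IsCo F → N.IsCo F → P.IsCo F →
      br M (N.tt P) =
        assocMat' (K := K) N P M * cmatT (1 : Matrix N.B N.B K) (br M P) * assocMat (K := K) N M P *
          cmatT (br M N) (1 : Matrix P.B P.B K) * assocMat' (K := K) M N P

/-- A twist (ribbon structure) `{θ_U}` on the braided category `Com^f_H`: a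
functorial family of comodule automorphisms with
`θ_{U ⊗̄ V} = c_{VU} c_{UV} (θ_U ⊗̄ θ_V)` compatible with duality. -/
structure TwistCom (F : Str K V H) (S : H →ₗ[K] H) (BC : BraidedCom F) where
  tw : ∀ M : BCom V H, Matrix M.B M.B K
  twInv : ∀ M : BCom V H, Matrix M.B M.B K
  tw_comod : ∀ M : BCom V H, M.IsCo F → IsComMat M.c M.c (tw M)
  tw_inv_l : ∀ M : BCom V H, M.IsCo F → twInv M * tw M = 1
  tw_inv_r : ∀ M : BCom V H, M.IsCo F → tw M * twInv M = 1
  tw_natural : ∀ (M N : BCom V H) (f : Matrix N.B M.B K),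
      M.IsCo F → N.IsCo F → IsComMat M.c N.c f → tw N * f = f * tw M
  tw_tensor : ∀ M N : BCom V H, M.IsCo F → N.IsCo F →
      tw (M.tt N) = BC.br N M * BC.br M N * cmatT (tw M) (tw N)
  tw_dual : ∀ M : BCom V H, M.IsCo F → tw (M.dual S) = (tw M).transpose

/-- `φ` realizes the based comodule `M` as a subcomodule of the regular comodule `H`. -/
def IsEmbed (F : Str K V H) (M : BCom V H) (φ : M.B → H) : Prop :=
  ∀ b, F.comul (φ b) = ∑ p, φ p ⊗ₜ[K] M.c p b

/-- The four series of classical Dynkin diagrams. -/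
inductive XSeries | A | B | C | D
deriving DecidableEq

namespace Jimbo

/-- The size `N` of the natural representation. -/
def Nval : XSeries → ℕ → ℕ
  | .A, l => l + 1
  | .B, l => 2 * l + 1
  | .C, l => 2 * l
  | .D, l => 2 * l

/-- `ν = 0, -1, 1, -1` for `X = A, B, C, D`. -/
def nuval : XSeries → ℤ
  | .A => 0
  | .B => -1
  | .C => 1
  | .D => -1

/-- `i' = N + 1 - i` (1-based). -/
def iPr (N i : ℕ) : ℕ := N + 1 - i

/-- `σ_i` (1-based) for the series `B, C, D`. -/
def sigmaIdx (N i : ℕ) : ℤ :=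
  if 2 * i < N + 1 then 1 else if 2 * i = N + 1 then 0 else -1

/-- `q` raised to a half-integral power: the exponent `e` counts halves,
`q^{e/2}` for even `e` and `qh^e` (where `qh = q^{1/2}`) for odd `e`. -/
def powHalf {K : Type*} [Field K] (q qh : Kˣ) (e : ℤ) : Kˣ :=
  if e % 2 = 0 then q ^ (e / 2) else qh ^ e

/-- `ε_i` (1-based) for the series `B, C, D`. -/
def epsIdx {K : Type*} [Field K] (ν : ℤ) (N i : ℕ) : K :=
  if 2 * i ≤ N + 1 then 1 else ((-ν : ℤ) : K)

/-- Jimbo's R-matrix of type `A_l` on `K^N ⊗ K^N`,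
`Ř_q(A_l) = q⁻¹ Σ_r E_rr ⊗ E_rr + Σ_{r≠s} E_rs ⊗ E_sr − (q−q⁻¹) Σ_{r>s} E_rr ⊗ E_ss`. -/
def Ra {K : Type*} [Field K] (l : ℕ) (q : Kˣ) :
    Matrix (Fin (l + 1) × Fin (l + 1)) (Fin (l + 1) × Fin (l + 1)) K :=
  fun ou inp =>
    (if ou.1 = inp.1 ∧ ou.2 = inp.2 ∧ ou.1 = ou.2 then ((q⁻¹ : Kˣ) : K) else 0) +
    (if ou.1 = inp.2 ∧ ou.2 = inp.1 ∧ ou.1 ≠ ou.2 then 1 else 0) +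
    (if ou.1 = inp.1 ∧ ou.2 = inp.2 ∧ (ou.2 : ℕ) < (ou.1 : ℕ) then
      -((q : K) - ((q⁻¹ : Kˣ) : K)) else 0)

/-- Jimbo's R-matrix of type `B_l`, `C_l`, `D_l` on `K^N ⊗ K^N`. -/
def Rbcd {K : Type*} [Field K] (X : XSeries) (l : ℕ) (q qh : Kˣ) :
    Matrix (Fin (Nval X l) × Fin (Nval X l)) (Fin (Nval X l) × Fin (Nval X l)) K :=
  fun ou inp =>
    let N := Nval X l
    let ν := nuval X
    let a := (ou.1 : ℕ) + 1
    let b := (ou.2 : ℕ) + 1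
    let c := (inp.1 : ℕ) + 1
    let d := (inp.2 : ℕ) + 1
    (if a = c ∧ b = d ∧ a = b ∧ a ≠ iPr N a then ((q⁻¹ : Kˣ) : K) else 0) +
    (if a = d ∧ b = c ∧ b = iPr N a ∧ a ≠ iPr N a then (q : K) else 0) +
    (if a = c ∧ b = d ∧ a = b ∧ a = iPr N a then 1 else 0) +
    (if a = d ∧ b = c ∧ a ≠ b ∧ a ≠ iPr N b then 1 else 0) +
    (if a = c ∧ b = d ∧ b < a then -((q : K) - ((q⁻¹ : Kˣ) : K)) else 0) +
    (if b = iPr N a ∧ c = iPr N d ∧ d < a then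
      ((q : K) - ((q⁻¹ : Kˣ) : K)) * epsIdx ν N a * epsIdx ν N d *
        ((powHalf q qh (2 * ((a : ℤ) - (d : ℤ)) - (sigmaIdx N a - sigmaIdx N d) * ν) : Kˣ) : K)
    else 0)

/-- Jimbo's R-matrix `Ř_q(X_l)` of type `X_l` (for `X = B` the parameter `qh` is a
square root of `q`; it is not used for the other series). -/
def Rjimbo {K : Type*} [Field K] (X : XSeries) (l : ℕ) (q qh : Kˣ) :
    Matrix (Fin (Nval X l) × Fin (Nval X l)) (Fin (Nval X l) × Fin (Nval X l)) K :=
  match X with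
  | .A => Ra l q
  | .B => Rbcd .B l q qh
  | .C => Rbcd .C l q qh
  | .D => Rbcd .D l q qh

/-- A matrix on `(Fin N × Fin N)` viewed as an operator on the length-two paths of the
graph of the corresponding vertex model (with a single vertex). -/
def WofMat {K : Type*} [Field K] {E : Type*} (M : Matrix (E × E) (E × E) K) :
    Matrix (Comp2 (fun _ : E => PUnit.unit) (fun _ : E => PUnit.unit))
      (Comp2 (fun _ : E => PUnit.unit) (fun _ : E => PUnit.unit)) K :=
  fun x y => M x.1 y.1

end Jimbo

end FaceAlg

end

/-!
Since `Δ` maps `H_γ` into `H_γ ⊗ H_γ`, convolution in `(H ⊗ H)*`, `(H ⊗ H^cop)*` and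
`((H ⊗ H) ⊗ H)*` multiplies the factors by which forms are rescaled on homogeneous tensors.
Rescaling `R⁺` by `χ` and `R⁻` by `χ⁻¹` therefore preserves every generalized-inverse relation
(its idempotents get the factor `χ χ⁻¹ = 1`) and the relation `R⁺ m*(X) R⁻ = (m^op)*(X)`.
In the hexagon axioms the left side picks up `χ(γ₁γ₂, δ)` (resp. `χ(γ, δ₁δ₂)`) and the right
side `χ(γ₁, δ) χ(γ₂, δ)` (resp. `χ(γ, δ₂) χ(γ, δ₁)`), which agree by bimultiplicativity.
The same rescaling of Lyubashenko forms `Q^∓` by `χ^±1` gives Lyubashenko forms for `R±_χ`.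
-/

open FaceAlg TensorProduct

section GradedExt

variable {R M N ι : Type*} [CommSemiring R] [AddCommMonoid M] [Module R M]
  [AddCommMonoid N] [Module R N] {A : ι → Submodule R M}

theorem LinearMap.ext_of_iSup_eq_top (hA : ⨆ i, A i = ⊤) {f g : M →ₗ[R] N}
    (h : ∀ i, ∀ x ∈ A i, f x = g x) : f = g :=
  LinearMap.ext_on (s := ⋃ i, (A i : Set M)) (by rw [← Submodule.iSup_eq_span, hA])
    fun x hx => by
      obtain ⟨i, hi⟩ := Set.mem_iUnion.mp hx
      exact h i x hi

theorem TensorProduct.ext_of_iSup_eq_top (hA : ⨆ i, A i = ⊤) {f g : M ⊗[R] M →ₗ[R] N}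
    (h : ∀ i j, ∀ x ∈ A i, ∀ y ∈ A j, f (x ⊗ₜ y) = g (x ⊗ₜ y)) : f = g :=
  TensorProduct.ext <| LinearMap.ext_of_iSup_eq_top hA fun i x hx =>
    LinearMap.ext_of_iSup_eq_top hA fun j y hy => h i j x hx y hy

theorem TensorProduct.ext_threefold_of_iSup_eq_top (hA : ⨆ i, A i = ⊤)
    {f g : (M ⊗[R] M) ⊗[R] M →ₗ[R] N}
    (h : ∀ i j k, ∀ x ∈ A i, ∀ y ∈ A j, ∀ z ∈ A k, f ((x ⊗ₜ y) ⊗ₜ z) = g ((x ⊗ₜ y) ⊗ₜ z)) :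
    f = g :=
  TensorProduct.ext <| TensorProduct.ext_of_iSup_eq_top hA fun i j x hx y hy =>
    LinearMap.ext_of_iSup_eq_top hA fun k z hz => h i j k x hx y hy z hz

end GradedExt

namespace FaceAlg

variable {K H Γ : Type*} [Field K] [Ring H] [Algebra K H] {A : Γ → Submodule K H}

def IsTwist (A : Γ → Submodule K H) (c : Γ → Γ → K) (Z Z' : H ⊗[K] H →ₗ[K] K) : Prop :=
  ∀ γ δ, ∀ a ∈ A γ, ∀ b ∈ A δ, Z (a ⊗ₜ b) = c γ δ * Z' (a ⊗ₜ b)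

def IsTwist₃ (A : Γ → Submodule K H) (f : Γ → Γ → Γ → K)
    (Z Z' : (H ⊗[K] H) ⊗[K] H →ₗ[K] K) : Prop :=
  ∀ γ₁ γ₂ γ₃, ∀ a ∈ A γ₁, ∀ b ∈ A γ₂, ∀ d ∈ A γ₃,
    Z ((a ⊗ₜ b) ⊗ₜ d) = f γ₁ γ₂ γ₃ * Z' ((a ⊗ₜ b) ⊗ₜ d)

section Twist

variable [DecidableEq Γ]

noncomputable def twist (hA : DirectSum.IsInternal A) (c : Γ → Γ → K)
    (R : H ⊗[K] H →ₗ[K] K) : H ⊗[K] H →ₗ[K] K :=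
  DirectSum.toModule K (Γ × Γ) K
      (fun p => c p.1 p.2 • R ∘ₗ map (A p.1).subtype (A p.2).subtype) ∘ₗ
    (TensorProduct.directSum K K (fun γ => A γ) (fun δ => A δ)).toLinearMap ∘ₗ
    map (LinearEquiv.ofBijective (DirectSum.coeLinearMap A) hA).symm.toLinearMap
      (LinearEquiv.ofBijective (DirectSum.coeLinearMap A) hA).symm.toLinearMap

theorem isTwist_twist (hA : DirectSum.IsInternal A) (c : Γ → Γ → K) (R : H ⊗[K] H →ₗ[K] K) :
    IsTwist A c (twist hA c R) R := by
  have hof : ∀ γ, ∀ a (ha : a ∈ A γ),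
      (LinearEquiv.ofBijective (DirectSum.coeLinearMap A) hA).symm a =
        DirectSum.lof K Γ (fun γ => A γ) γ ⟨a, ha⟩ := fun γ a ha => by
    rw [LinearEquiv.symm_apply_eq, DirectSum.lof_eq_of]
    exact (DirectSum.coeLinearMap_of A γ ⟨a, ha⟩).symm
  intro γ δ a ha b hb
  simp [twist, hof γ a ha, hof δ b hb, TensorProduct.directSum_lof_tmul_lof]

end Twist

theorem IsTwist.refl (Z : H ⊗[K] H →ₗ[K] K) : IsTwist A 1 Z Z :=
  fun _ _ _ _ _ _ => (one_mul _).symm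

theorem IsTwist.unique (hA : ⨆ γ, A γ = ⊤) {c : Γ → Γ → K} {Z Z' W : H ⊗[K] H →ₗ[K] K}
    (hZ : IsTwist A c Z Z') (hW : IsTwist A c W Z') : Z = W :=
  TensorProduct.ext_of_iSup_eq_top hA fun γ δ a ha b hb => by
    rw [hZ γ δ a ha b hb, hW γ δ a ha b hb]

theorem IsTwist₃.unique (hA : ⨆ γ, A γ = ⊤) {f : Γ → Γ → Γ → K}
    {Z Z' W : (H ⊗[K] H) ⊗[K] H →ₗ[K] K} (hZ : IsTwist₃ A f Z Z') (hW : IsTwist₃ A f W Z') :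
    Z = W :=
  TensorProduct.ext_threefold_of_iSup_eq_top hA fun γ₁ γ₂ γ₃ a ha b hb d hd => by
    rw [hZ γ₁ γ₂ γ₃ a ha b hb d hd, hW γ₁ γ₂ γ₃ a ha b hb d hd]

theorem IsTwist.comp_map_subtype {c : Γ → Γ → K} {Z Z' : H ⊗[K] H →ₗ[K] K}
    (h : IsTwist A c Z Z') (γ δ : Γ) :
    Z ∘ₗ map (A γ).subtype (A δ).subtype = c γ δ • (Z' ∘ₗ map (A γ).subtype (A δ).subtype) :=
  TensorProduct.ext' fun a b => h γ δ a a.2 b b.2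

theorem IsTwist₃.comp_map_subtype {f : Γ → Γ → Γ → K} {Z Z' : (H ⊗[K] H) ⊗[K] H →ₗ[K] K}
    (h : IsTwist₃ A f Z Z') (γ₁ γ₂ γ₃ : Γ) :
    Z ∘ₗ map (map (A γ₁).subtype (A γ₂).subtype) (A γ₃).subtype =
      f γ₁ γ₂ γ₃ • (Z' ∘ₗ map (map (A γ₁).subtype (A γ₂).subtype) (A γ₃).subtype) :=
  TensorProduct.ext_threefold fun a b d => h γ₁ γ₂ γ₃ a a.2 b b.2 d d.2

theorem IsTwist.lid_map_comp {c c' : Γ → Γ → K} {Z Z' W W' : H ⊗[K] H →ₗ[K] K}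
    {Φ : H ⊗[K] H →ₗ[K] (H ⊗[K] H) ⊗[K] (H ⊗[K] H)}
    (hΦ : ∀ γ δ, ∀ a ∈ A γ, ∀ b ∈ A δ, Φ (a ⊗ₜ b) ∈ LinearMap.range
      (map (map (A γ).subtype (A δ).subtype) (map (A γ).subtype (A δ).subtype)))
    (hZ : IsTwist A c Z Z') (hW : IsTwist A c' W W') :
    IsTwist A (c * c') ((TensorProduct.lid K K).toLinearMap ∘ₗ map Z W ∘ₗ Φ)
      ((TensorProduct.lid K K).toLinearMap ∘ₗ map Z' W' ∘ₗ Φ) := by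
  intro γ δ a ha b hb
  obtain ⟨s, hs⟩ := hΦ γ δ a ha b hb
  simp only [LinearMap.comp_apply, ← hs, ← LinearMap.comp_apply (map _ _), ← map_comp,
    hZ.comp_map_subtype, hW.comp_map_subtype, map_smul_left, map_smul_right, smul_smul,
    LinearMap.smul_apply, map_smul, smul_eq_mul, Pi.mul_apply]
  ring

namespace Str

variable {V : Type*} [Fintype V] [DecidableEq V] (F : Str K V H)

def ComulGraded (A : Γ → Submodule K H) : Prop :=
  ∀ γ, ∀ a ∈ A γ, F.comul a ∈ LinearMap.range (map (A γ).subtype (A γ).subtype)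

variable {F}

theorem comul2_tmul_mem_range (hΔ : F.ComulGraded A) {γ δ : Γ} {a b : H} (ha : a ∈ A γ)
    (hb : b ∈ A δ) : F.comul2 (a ⊗ₜ b) ∈ LinearMap.range
      (map (map (A γ).subtype (A δ).subtype) (map (A γ).subtype (A δ).subtype)) := by
  obtain ⟨t, ht⟩ := hΔ γ a ha
  obtain ⟨u, hu⟩ := hΔ δ b hb
  refine ⟨tensorTensorTensorComm K _ _ _ _ (t ⊗ₜ u), ?_⟩
  rw [comul2, LinearMap.comp_apply, map_tmul, ← ht, ← hu, ← map_tmul]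
  exact (LinearMap.congr_fun (tensorTensorTensorComm_comp_map K _ _ _ _) (t ⊗ₜ u)).symm

theorem comul2cop_tmul_mem_range (hΔ : F.ComulGraded A) {γ δ : Γ} {a b : H} (ha : a ∈ A γ)
    (hb : b ∈ A δ) : F.comul2cop (a ⊗ₜ b) ∈ LinearMap.range
      (map (map (A γ).subtype (A δ).subtype) (map (A γ).subtype (A δ).subtype)) := by
  obtain ⟨t, ht⟩ := hΔ γ a ha
  obtain ⟨u, hu⟩ := hΔ δ b hb
  have hu' : (TensorProduct.comm K H H).toLinearMap (F.comul b) =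
      map (A δ).subtype (A δ).subtype (TensorProduct.comm K _ _ u) := by
    rw [LinearEquiv.coe_coe, map_comm, hu]
  refine ⟨tensorTensorTensorComm K _ _ _ _ (t ⊗ₜ TensorProduct.comm K _ _ u), ?_⟩
  rw [comul2cop, LinearMap.comp_apply, map_tmul, LinearMap.comp_apply, hu',
    ← ht, ← map_tmul]
  exact (LinearMap.congr_fun (tensorTensorTensorComm_comp_map K _ _ _ _) _).symm

end Str

theorem IsTwist.conv2 {V : Type*} [Fintype V] [DecidableEq V] {F : Str K V H}
    (hΔ : F.ComulGraded A) {c c' : Γ → Γ → K} {Z Z' W W' : H ⊗[K] H →ₗ[K] K}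
    (hZ : IsTwist A c Z Z') (hW : IsTwist A c' W W') :
    IsTwist A (c * c') (F.conv2 Z W) (F.conv2 Z' W') :=
  hZ.lid_map_comp (fun _ _ _ ha _ hb => Str.comul2_tmul_mem_range hΔ ha hb) hW

theorem IsTwist.conv2cop {V : Type*} [Fintype V] [DecidableEq V] {F : Str K V H}
    (hΔ : F.ComulGraded A) {c c' : Γ → Γ → K} {Z Z' W W' : H ⊗[K] H →ₗ[K] K}
    (hZ : IsTwist A c Z Z') (hW : IsTwist A c' W W') :
    IsTwist A (c * c') (F.conv2cop Z W) (F.conv2cop Z' W') :=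
  hZ.lid_map_comp (fun _ _ _ ha _ hb => Str.comul2cop_tmul_mem_range hΔ ha hb) hW

theorem IsTwist₃.conv3 {V : Type*} [Fintype V] [DecidableEq V] {F : Str K V H}
    (hΔ : F.ComulGraded A) {f g : Γ → Γ → Γ → K} {Z Z' W W' : (H ⊗[K] H) ⊗[K] H →ₗ[K] K}
    (hZ : IsTwist₃ A f Z Z') (hW : IsTwist₃ A g W W') :
    IsTwist₃ A (f * g) (F.conv3 Z W) (F.conv3 Z' W') := by
  intro γ₁ γ₂ γ₃ a ha b hb d hd
  obtain ⟨s, hs⟩ := Str.comul2_tmul_mem_range hΔ ha hb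
  obtain ⟨v, hv⟩ := hΔ γ₃ d hd
  have hsplit : F.comul3 ((a ⊗ₜ b) ⊗ₜ d) =
      map (map (map (A γ₁).subtype (A γ₂).subtype) (A γ₃).subtype)
        (map (map (A γ₁).subtype (A γ₂).subtype) (A γ₃).subtype)
        (tensorTensorTensorComm K _ _ _ _ (s ⊗ₜ v)) := by
    rw [Str.comul3, LinearMap.comp_apply, map_tmul, ← hs, ← hv, ← map_tmul]
    exact LinearMap.congr_fun (tensorTensorTensorComm_comp_map K _ _ _ _) (s ⊗ₜ v)
  simp only [Str.conv3, LinearMap.comp_apply, hsplit, ← LinearMap.comp_apply (map _ _),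
    ← map_comp, hZ.comp_map_subtype, hW.comp_map_subtype, map_smul_left, map_smul_right,
    smul_smul, LinearMap.smul_apply, map_smul, smul_eq_mul, Pi.mul_apply]
  ring

section Insertions

variable {V : Type*} [Fintype V] [DecidableEq V] (F : Str K V H) {c : Γ → Γ → K}
  {Z Z' : H ⊗[K] H →ₗ[K] K}

theorem IsTwist.ins12 (h : IsTwist A c Z Z') :
    IsTwist₃ A (fun γ₁ γ₂ _ => c γ₁ γ₂) (F.ins12 Z) (F.ins12 Z') := by
  intro γ₁ γ₂ γ₃ a ha b hb d _
  simp only [Str.ins12, LinearMap.comp_apply, LinearEquiv.coe_coe, map_tmul, lid_tmul,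
    smul_eq_mul, h γ₁ γ₂ a ha b hb]
  ring

theorem IsTwist.ins13 (h : IsTwist A c Z Z') :
    IsTwist₃ A (fun γ₁ _ γ₃ => c γ₁ γ₃) (F.ins13 Z) (F.ins13 Z') := by
  intro γ₁ γ₂ γ₃ a ha b _ d hd
  simp only [Str.ins13, Str.ins12, swap23, LinearMap.comp_apply, LinearEquiv.coe_coe,
    assoc_tmul, map_tmul, LinearMap.id_apply, comm_tmul, assoc_symm_tmul, lid_tmul,
    smul_eq_mul, h γ₁ γ₃ a ha d hd]
  ring

theorem IsTwist.ins23 (h : IsTwist A c Z Z') :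
    IsTwist₃ A (fun _ γ₂ γ₃ => c γ₂ γ₃) (F.ins23 Z) (F.ins23 Z') := by
  intro γ₁ γ₂ γ₃ a _ b hb d hd
  simp only [Str.ins23, LinearMap.comp_apply, LinearEquiv.coe_coe, assoc_tmul, map_tmul,
    lid_tmul, smul_eq_mul, h γ₂ γ₃ b hb d hd]
  ring

end Insertions

section Multiplication

variable [Mul Γ] {c : Γ → Γ → K} {Z Z' : H ⊗[K] H →ₗ[K] K}

theorem IsTwist.comp_map_mul_id (hmul : ∀ γ δ, ∀ a ∈ A γ, ∀ b ∈ A δ, a * b ∈ A (γ * δ))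
    (h : IsTwist A c Z Z') :
    IsTwist₃ A (fun γ₁ γ₂ γ₃ => c (γ₁ * γ₂) γ₃)
      (Z ∘ₗ map (mulH K H) LinearMap.id) (Z' ∘ₗ map (mulH K H) LinearMap.id) :=
  fun _ _ _ a ha b hb d hd => h _ _ (a * b) (hmul _ _ a ha b hb) d hd

theorem IsTwist.comp_map_id_mul_assoc (hmul : ∀ γ δ, ∀ a ∈ A γ, ∀ b ∈ A δ, a * b ∈ A (γ * δ))
    (h : IsTwist A c Z Z') :
    IsTwist₃ A (fun γ₁ γ₂ γ₃ => c γ₁ (γ₂ * γ₃))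
      (Z ∘ₗ map LinearMap.id (mulH K H) ∘ₗ (TensorProduct.assoc K H H H).toLinearMap)
      (Z' ∘ₗ map LinearMap.id (mulH K H) ∘ₗ (TensorProduct.assoc K H H H).toLinearMap) :=
  fun _ _ _ a ha b hb d hd => h _ _ a ha (b * d) (hmul _ _ b hb d hd)

end Multiplication

theorem GenInv.twist (hA : ⨆ γ, A γ = ⊤)
    {C : (H ⊗[K] H →ₗ[K] K) → (H ⊗[K] H →ₗ[K] K) → H ⊗[K] H →ₗ[K] K}
    (hC : ∀ {c c' : Γ → Γ → K} {Z Z' W W' : H ⊗[K] H →ₗ[K] K},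
      IsTwist A c Z Z' → IsTwist A c' W W' → IsTwist A (c * c') (C Z W) (C Z' W'))
    {cp cm : Γ → Γ → K} (hc : cp * cm = 1) {ep em xp xm Xp Xm : H ⊗[K] H →ₗ[K] K}
    (hp : IsTwist A cp Xp xp) (hm : IsTwist A cm Xm xm) (h : GenInv C ep em xp xm) :
    GenInv C ep em Xp Xm := by
  obtain ⟨h₁, h₂, h₃, h₄⟩ := h
  have hc' : cm * cp = 1 := by rw [mul_comm, hc]
  refine ⟨?_, ?_, ?_, ?_⟩
  · have h := hC hm hp
    rw [hc', h₁] at h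
    exact h.unique hA (.refl ep)
  · have h := hC hp hm
    rw [hc, h₂] at h
    exact h.unique hA (.refl em)
  · have h := hC hp (hC hm hp)
    rw [h₃, ← mul_assoc, hc, one_mul] at h
    exact h.unique hA hp
  · have h := hC hm (hC hp hm)
    rw [h₄, ← mul_assoc, hc', one_mul] at h
    exact h.unique hA hm

variable {V : Type*} [Fintype V] [DecidableEq V] {F : Str K V H}
  {Rp Rm Rp' Rm' : H ⊗[K] H →ₗ[K] K} {cp cm : Γ → Γ → K}

theorem IsBraiding.twist [Mul Γ] (hbr : IsBraiding F Rp Rm) (hA : ⨆ γ, A γ = ⊤)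
    (hmul : ∀ γ δ, ∀ a ∈ A γ, ∀ b ∈ A δ, a * b ∈ A (γ * δ)) (hΔ : F.ComulGraded A)
    (hc : cp * cm = 1) (hc₁ : ∀ γ₁ γ₂ δ, cp (γ₁ * γ₂) δ = cp γ₁ δ * cp γ₂ δ)
    (hc₂ : ∀ γ δ₁ δ₂, cp γ (δ₁ * δ₂) = cp γ δ₁ * cp γ δ₂)
    (hp : IsTwist A cp Rp' Rp) (hm : IsTwist A cm Rm' Rm) : IsBraiding F Rp' Rm' := by
  refine ⟨hbr.geninv.twist hA (fun hZ hW => hZ.conv2 hΔ hW) hc hp hm, fun X => ?_, ?_, ?_⟩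
  · have h := (hp.conv2 hΔ (.refl (X ∘ₗ mulH K H))).conv2 hΔ hm
    rw [mul_one, hc, hbr.inter X] at h
    exact h.unique hA (.refl _)
  · have hfac : (fun γ₁ γ₂ γ₃ => cp (γ₁ * γ₂) γ₃) =
        (fun γ₁ _ γ₃ => cp γ₁ γ₃) * fun _ γ₂ γ₃ => cp γ₂ γ₃ := funext₃ hc₁
    have h := (hp.ins13 F).conv3 hΔ (hp.ins23 F)
    rw [← hbr.hex1, ← hfac] at h
    exact (hp.comp_map_mul_id hmul).unique hA h
  · have hfac : (fun γ₁ γ₂ γ₃ => cp γ₁ (γ₂ * γ₃)) =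
        (fun γ₁ _ γ₃ => cp γ₁ γ₃) * fun γ₁ γ₂ _ => cp γ₁ γ₂ :=
      funext₃ fun γ₁ γ₂ γ₃ => (hc₂ γ₁ γ₂ γ₃).trans (mul_comm _ _)
    have h := (hp.ins13 F).conv3 hΔ (hp.ins12 F)
    rw [← hbr.hex2, ← hfac] at h
    exact (hp.comp_map_id_mul_assoc hmul).unique hA h

theorem IsClosable.twist [DecidableEq Γ] (hcl : IsClosable F Rp Rm)
    (hA : DirectSum.IsInternal A) (hΔ : F.ComulGraded A) (hc : cp * cm = 1)
    (hp : IsTwist A cp Rp' Rp) (hm : IsTwist A cm Rm' Rm) : IsClosable F Rp' Rm' := by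
  obtain ⟨Qp, Qm, hQm, hQp⟩ := hcl
  have hA' := hA.submodule_iSup_eq_top
  exact ⟨FaceAlg.twist hA cp Qp, FaceAlg.twist hA cm Qm,
    hQm.twist hA' (fun hZ hW => hZ.conv2cop hΔ hW) hc hp (isTwist_twist hA cm Qm),
    hQp.twist hA' (fun hZ hW => hZ.conv2cop hΔ hW) (by rw [mul_comm, hc]) hm
      (isTwist_twist hA cp Qp)⟩

end FaceAlg

open FaceAlg TensorProduct in
theorem braiding_twist_by_bicharacter_general
    {K : Type*} [Field K] {V : Type*} [Fintype V] [DecidableEq V]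
    {H : Type*} [Ring H] [Algebra K H]
    (F : FaceAlg.Str K V H) (Rp Rm : H ⊗[K] H →ₗ[K] K)
    (hbr : IsBraiding F Rp Rm)
    (Γ : Type*) [Semigroup Γ] [DecidableEq Γ] (A : Γ → Submodule K H)
    (hdec : DirectSum.IsInternal A)
    (hmul : ∀ γ δ : Γ, ∀ a ∈ A γ, ∀ b ∈ A δ, a * b ∈ A (γ * δ))
    (hcom : ∀ γ : Γ, ∀ a ∈ A γ,
      F.comul a ∈ LinearMap.range (TensorProduct.map (A γ).subtype (A γ).subtype))
    (χ : Γ → Γ → Kˣ)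
    (hχ1 : ∀ γ₁ γ₂ δ : Γ, χ (γ₁ * γ₂) δ = χ γ₁ δ * χ γ₂ δ)
    (hχ2 : ∀ γ δ₁ δ₂ : Γ, χ γ (δ₁ * δ₂) = χ γ δ₁ * χ γ δ₂) :
    ∃ Rpχ Rmχ : H ⊗[K] H →ₗ[K] K,
      (∀ γ δ : Γ, ∀ a ∈ A γ, ∀ b ∈ A δ,
        Rpχ (a ⊗ₜ[K] b) = (χ γ δ : K) * Rp (a ⊗ₜ[K] b) ∧
        Rmχ (a ⊗ₜ[K] b) = (((χ γ δ)⁻¹ : Kˣ) : K) * Rm (a ⊗ₜ[K] b)) ∧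
      IsBraiding F Rpχ Rmχ ∧
      (IsClosable F Rp Rm → IsClosable F Rpχ Rmχ) := by
  set cp : Γ → Γ → K := fun γ δ => (χ γ δ : K)
  set cm : Γ → Γ → K := fun γ δ => (((χ γ δ)⁻¹ : Kˣ) : K)
  have hc : cp * cm = 1 := funext₂ fun γ δ => (χ γ δ).mul_inv
  have hp := isTwist_twist hdec cp Rp
  have hm := isTwist_twist hdec cm Rm
  have hcp₁ : ∀ γ₁ γ₂ δ, cp (γ₁ * γ₂) δ = cp γ₁ δ * cp γ₂ δ := fun γ₁ γ₂ δ => by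
    simp only [cp, hχ1, Units.val_mul]
  have hcp₂ : ∀ γ δ₁ δ₂, cp γ (δ₁ * δ₂) = cp γ δ₁ * cp γ δ₂ := fun γ δ₁ δ₂ => by
    simp only [cp, hχ2, Units.val_mul]
  exact ⟨twist hdec cp Rp, twist hdec cm Rm,
    fun γ δ a ha b hb => ⟨hp γ δ a ha b hb, hm γ δ a ha b hb⟩,
    hbr.twist hdec.submodule_iSup_eq_top hmul hcom hc hcp₁ hcp₂ hp hm,
    fun hcl => hcl.twist hdec hcom hc hp hm⟩

open FaceAlg TensorProduct in
/-- Twisting the braiding of a CQT `𝒱`-face algebra by a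
bimultiplicative form `χ` on a semigroup grading yields a new braiding `R±_χ`
determined by `R±_χ(a, b) = χ(γ, δ)^{±1} R±(a, b)` for `a ∈ H_γ`, `b ∈ H_δ`;
if `(H, R±)` is closable then so is `(H, R±_χ)`. -/
theorem braiding_twist_by_bicharacter
    {K : Type*} [Field K] {V : Type*} [Fintype V] [DecidableEq V] [Nonempty V]
    {H : Type*} [Ring H] [Algebra K H]
    (F : FaceAlg.Str K V H) (Rp Rm : H ⊗[K] H →ₗ[K] K)
    (hbr : IsBraiding F Rp Rm)
    (Γ : Type*) [Semigroup Γ] [DecidableEq Γ] (A : Γ → Submodule K H)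
    (hdec : DirectSum.IsInternal A)
    (hmul : ∀ γ δ : Γ, ∀ a ∈ A γ, ∀ b ∈ A δ, a * b ∈ A (γ * δ))
    (hcom : ∀ γ : Γ, ∀ a ∈ A γ,
      F.comul a ∈ LinearMap.range (TensorProduct.map (A γ).subtype (A γ).subtype))
    (χ : Γ → Γ → Kˣ)
    (hχ1 : ∀ γ₁ γ₂ δ : Γ, χ (γ₁ * γ₂) δ = χ γ₁ δ * χ γ₂ δ)
    (hχ2 : ∀ γ δ₁ δ₂ : Γ, χ γ (δ₁ * δ₂) = χ γ δ₁ * χ γ δ₂) :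
    ∃ Rpχ Rmχ : H ⊗[K] H →ₗ[K] K,
      (∀ γ δ : Γ, ∀ a ∈ A γ, ∀ b ∈ A δ,
        Rpχ (a ⊗ₜ[K] b) = (χ γ δ : K) * Rp (a ⊗ₜ[K] b) ∧
        Rmχ (a ⊗ₜ[K] b) = (((χ γ δ)⁻¹ : Kˣ) : K) * Rm (a ⊗ₜ[K] b)) ∧
      IsBraiding F Rpχ Rmχ ∧
      (IsClosable F Rp Rm → IsClosable F Rpχ Rmχ) :=
  braiding_twist_by_bicharacter_general F Rp Rm hbr Γ A hdec hmul hcom χ hχ1 hχ2
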